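/- Let C ⊆ F_q^n be a linear block code of dimension k with Hamming metric. There exists a generator matrix G of C with rows g_1,...,g_k such that for each 1 ≤ i ≤ k, the greedy subcode distance α_i^g(C) equals both the i-th partial distance of G and the Hamming weight of g_i, where the chain D_i = ⟨g_1,...,g_i⟩ is a chain of α_i-greedy subcodes. -/

import Mathlib

open Module

/-- Hamming weight of a vector. -/
noncomputable def hwt {ι α : Type*} [Zero α] (x : ι → α) : ℕ := {i | x i ≠ 0}.ncard

/-- Minimum distance (minimum weight of a nonzero element) of a code `D`. -/
noncomputable def dminN {𝔽 V : Type*} [Field 𝔽] [AddCommGroup V] [Module 𝔽 V]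
    (wt : V → ℕ) (D : Submodule 𝔽 V) : ℕ :=
  sInf (wt '' {v : V | v ∈ D ∧ v ≠ 0})

/-- The `i`-th code distance of a code `C`: for `i ≤ dim C` the largest minimum distance of
an `i`-dimensional subcode of `C`, and for `i ≥ dim C` the largest minimum distance of an
`i`-dimensional supercode of `C` (both notions agree at `i = dim C`). -/
noncomputable def alphaN {𝔽 V : Type*} [Field 𝔽] [AddCommGroup V] [Module 𝔽 V]
    (wt : V → ℕ) (C : Submodule 𝔽 V) (i : ℕ) : ℕ :=
  if i ≤ finrank 𝔽 C then
    sSup (dminN wt '' {D : Submodule 𝔽 V | D ≤ C ∧ finrank 𝔽 D = i})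
  else
    sSup (dminN wt '' {D : Submodule 𝔽 V | C ≤ D ∧ finrank 𝔽 D = i})

/-- `IsGreedy wt C i D` says `D` is an `α_i`-greedy subcode of `C`: for `i = 1`, `D` is
generated by a codeword of `C` of maximum weight; for `i + 1`, `D` is an `(i+1)`-dimensional
subcode of `C` of maximal minimum distance among the `(i+1)`-dimensional subcodes of `C`
containing some `α_i`-greedy subcode. -/
def IsGreedy {𝔽 V : Type*} [Field 𝔽] [AddCommGroup V] [Module 𝔽 V]
    (wt : V → ℕ) (C : Submodule 𝔽 V) : ℕ → Submodule 𝔽 V → Prop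
  | 0, D => D = ⊥
  | 1, D => ∃ c : V, c ∈ C ∧ wt c = sSup (wt '' (C : Set V)) ∧ D = Submodule.span 𝔽 {c}
  | (i + 2), E => ∃ D : Submodule 𝔽 V, IsGreedy wt C (i + 1) D ∧ D ≤ E ∧ E ≤ C ∧
      finrank 𝔽 E = i + 2 ∧
      ∀ E' D' : Submodule 𝔽 V, IsGreedy wt C (i + 1) D' → D' ≤ E' → E' ≤ C →
        finrank 𝔽 E' = i + 2 → dminN wt E' ≤ dminN wt E

/-- The `i`-th greedy subcode distance of `C`. -/
noncomputable def alphaG {𝔽 V : Type*} [Field 𝔽] [AddCommGroup V] [Module 𝔽 V]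
    (wt : V → ℕ) (C : Submodule 𝔽 V) (i : ℕ) : ℕ :=
  sSup {d : ℕ | ∃ D : Submodule 𝔽 V, IsGreedy wt C i D ∧ dminN wt D = d}

/-!
All greedy `i`-subcodes of `C` have the same minimum distance, so `α_i^g(C)` is the minimum
distance of any one of them, and `C` itself is the only greedy `(dim C)`-subcode. The key step is
that every greedy `(j+1)`-subcode `E` arises from a greedy `j`-subcode `D ≤ E` by adjoining a word
`x ∉ D` of minimum weight in `E`. If the greedy subcode `D₀` underlying `E` has a larger minimum
distance than `E`, any minimum-weight word of `E` lies outside `D₀`. Otherwise, by induction,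
`D₀ = D₁ + ⟨y⟩` with `wt y = d(D₀) = d(E)`, and for any `z ∈ E \ (D₁ + ⟨y⟩)` the code `D₁ + ⟨z⟩`
is again greedy and avoids `y`. Peeling such words off `C` one at a time gives the rows `g_i`.
Since `g_i ∉ ⟨g_1, …, g_{i-1}⟩`, the coset `g_i + ⟨g_1, …, g_{i-1}⟩` consists of nonzero words of
`D_i`, so its minimum weight is `d(D_i) = wt g_i`.
-/

open Set Submodule

theorem hwt_smul {ι M₀ : Type*} [MulZeroClass M₀] [NoZeroDivisors M₀] {c : M₀} (hc : c ≠ 0)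
    (x : ι → M₀) : hwt (c • x) = hwt x := by
  simp [hwt, hc]

section Finite

variable {ι α : Type*} [Zero α] [Finite ι]

theorem hwt_le_card (x : ι → α) : hwt x ≤ Nat.card ι :=
  Set.ncard_le_card _

theorem hwt_eq_zero_iff {x : ι → α} : hwt x = 0 ↔ x = 0 := by
  rw [hwt, Set.ncard_eq_zero (Set.toFinite _), Set.eq_empty_iff_forall_notMem, funext_iff]
  simp

theorem bddAbove_image_hwt (s : Set (ι → α)) : BddAbove (hwt '' s) :=
  ⟨Nat.card ι, by rintro _ ⟨x, -, rfl⟩; exact hwt_le_card x⟩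

end Finite

theorem exists_forall_le_of_bddAbove {β : Type*} {s : Set β} (f : β → ℕ) (hs : s.Nonempty)
    (hf : BddAbove (f '' s)) : ∃ a ∈ s, ∀ b ∈ s, f b ≤ f a := by
  obtain ⟨a, ha, hfa⟩ := Nat.sSup_mem (hs.image f) hf
  exact ⟨a, ha, fun b hb => hfa ▸ le_csSup hf ⟨b, hb, rfl⟩⟩

theorem Submodule.mem_sup_span_singleton_exchange {K V : Type*} [Field K] [AddCommGroup V]
    [Module K V] {p : Submodule K V} {x y : V} (hx : x ∈ p ⊔ span K {y}) (hxp : x ∉ p) :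
    y ∈ p ⊔ span K {x} := by
  have := mem_span_insert_exchange (s := (p : Set V)) (K := K)
    (by rwa [span_insert, span_eq, sup_comm]) (by rwa [span_eq])
  rwa [span_insert, span_eq, sup_comm] at this

theorem Submodule.exists_mem_notMem_of_finrank_lt {K V : Type*} [Field K] [AddCommGroup V]
    [Module K V] [FiniteDimensional K V] {D E : Submodule K V}
    (h : finrank K D < finrank K E) : ∃ x ∈ E, x ∉ D :=
  SetLike.not_le_iff_exists.mp fun hED => (finrank_mono hED).not_gt h

section General

variable {𝔽 V : Type*} [Field 𝔽] [AddCommGroup V] [Module 𝔽 V] {wt : V → ℕ}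
  {C D E : Submodule 𝔽 V}

theorem dminN_le {v : V} (hv : v ∈ D) (hv0 : v ≠ 0) : dminN wt D ≤ wt v :=
  Nat.sInf_le ⟨v, ⟨hv, hv0⟩, rfl⟩

theorem exists_wt_eq_dminN (hD : D ≠ ⊥) : ∃ v ∈ D, v ≠ 0 ∧ wt v = dminN wt D := by
  obtain ⟨v, hv, hv0⟩ := exists_mem_ne_zero_of_ne_bot hD
  obtain ⟨w, ⟨hw, hw0⟩, hweq⟩ :=
    Nat.sInf_mem (s := wt '' {v | v ∈ D ∧ v ≠ 0}) ⟨wt v, v, ⟨hv, hv0⟩, rfl⟩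
  exact ⟨w, hw, hw0, hweq⟩

theorem dminN_le_dminN_of_le (hD : D ≠ ⊥) (h : D ≤ E) : dminN wt E ≤ dminN wt D := by
  obtain ⟨v, hv, hv0, hvw⟩ := exists_wt_eq_dminN hD
  exact hvw ▸ dminN_le (h hv) hv0

theorem exists_wt_eq_dminN_notMem_of_dminN_lt (hE : E ≠ ⊥) (h : dminN wt E < dminN wt D) :
    ∃ x ∈ E, x ∉ D ∧ wt x = dminN wt E := by
  obtain ⟨x, hxE, hx0, hxw⟩ := exists_wt_eq_dminN hE
  exact ⟨x, hxE, fun hxD => (dminN_le hxD hx0).not_gt (hxw ▸ h), hxw⟩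

theorem sInf_wt_coset_eq (hDE : D ≤ E) {x : V} (hxE : x ∈ E) (hxD : x ∉ D)
    (hx : wt x = dminN wt E) : sInf {w | ∃ v, v - x ∈ D ∧ wt v = w} = wt x := by
  refine le_antisymm (Nat.sInf_le ⟨x, by simp, rfl⟩) (le_csInf ⟨wt x, x, by simp, rfl⟩ ?_)
  rintro _ ⟨v, hv, rfl⟩
  have hvE : v ∈ E := by simpa using E.add_mem (hDE hv) hxE
  have hv0 : v ≠ 0 := by rintro rfl; exact hxD (by simpa using hv)
  exact hx ▸ dminN_le hvE hv0

theorem IsGreedy.le : ∀ {i : ℕ} {D : Submodule 𝔽 V}, IsGreedy wt C i D → D ≤ C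
  | 0, _, rfl => bot_le
  | 1, _, ⟨_, hc, _, rfl⟩ => span_le.mpr (singleton_subset_iff.mpr hc)
  | _ + 2, _, ⟨_, _, _, hDC, _⟩ => hDC

theorem IsGreedy.of_dminN_le {i : ℕ} {D₀ F : Submodule 𝔽 V} (hD₀ : IsGreedy wt C (i + 2) D₀)
    (hD : IsGreedy wt C (i + 1) D) (hDF : D ≤ F) (hFC : F ≤ C) (hF : finrank 𝔽 F = i + 2)
    (h : dminN wt D₀ ≤ dminN wt F) : IsGreedy wt C (i + 2) F := by
  obtain ⟨-, -, -, -, -, hmax⟩ := hD₀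
  exact ⟨D, hD, hDF, hFC, hF,
    fun E' D' hD' hDE' hE'C hE' => (hmax E' D' hD' hDE' hE'C hE').trans h⟩

end General

section Hamming

variable {ι 𝔽 : Type*} [Field 𝔽] {C D E : Submodule 𝔽 (ι → 𝔽)}

theorem dminN_hwt_span_singleton {c : ι → 𝔽} (hc : c ≠ 0) :
    dminN hwt (span 𝔽 {c}) = hwt c := by
  refine le_antisymm (dminN_le (mem_span_singleton_self c) hc) ?_
  obtain ⟨v, hv, hv0, hvw⟩ := exists_wt_eq_dminN (wt := hwt) (by simpa using hc : span 𝔽 {c} ≠ ⊥)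
  obtain ⟨a, rfl⟩ := mem_span_singleton.mp hv
  rw [← hvw, hwt_smul (left_ne_zero_of_smul hv0)]

variable [Finite ι]

theorem dminN_hwt_le_card (D : Submodule 𝔽 (ι → 𝔽)) : dminN hwt D ≤ Nat.card ι := by
  rcases eq_or_ne D ⊥ with rfl | hD
  · simp [dminN]
  · obtain ⟨v, -, -, hv⟩ := exists_wt_eq_dminN (wt := hwt) hD
    exact hv ▸ hwt_le_card v

theorem hwt_le_sSup {v : ι → 𝔽} (hv : v ∈ C) : hwt v ≤ sSup (hwt '' (C : Set (ι → 𝔽))) :=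
  le_csSup (bddAbove_image_hwt _) ⟨v, hv, rfl⟩

theorem ne_zero_of_hwt_eq_sSup (hC : C ≠ ⊥) {c : ι → 𝔽}
    (hc : hwt c = sSup (hwt '' (C : Set (ι → 𝔽)))) : c ≠ 0 := by
  rintro rfl
  obtain ⟨v, hv, hv0⟩ := exists_mem_ne_zero_of_ne_bot hC
  have hv_le := hwt_le_sSup hv
  rw [← hc, hwt_eq_zero_iff.mpr rfl, Nat.le_zero, hwt_eq_zero_iff] at hv_le
  exact hv0 hv_le

namespace IsGreedy

theorem dminN_eq_sSup (hC : C ≠ ⊥) (hD : IsGreedy hwt C 1 D) :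
    dminN hwt D = sSup (hwt '' (C : Set (ι → 𝔽))) := by
  obtain ⟨c, -, hc, rfl⟩ := hD
  rw [dminN_hwt_span_singleton (ne_zero_of_hwt_eq_sSup hC hc), hc]

theorem finrank_eq (hC : C ≠ ⊥) : ∀ {i : ℕ} {D : Submodule 𝔽 (ι → 𝔽)}, IsGreedy hwt C i D →
    finrank 𝔽 D = i
  | 0, _, rfl => finrank_bot 𝔽 _
  | 1, _, ⟨_, _, hc, rfl⟩ => finrank_span_singleton (ne_zero_of_hwt_eq_sSup hC hc)
  | _ + 2, _, ⟨_, _, _, _, hD, _⟩ => hD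

theorem ne_bot (hC : C ≠ ⊥) {i : ℕ} (hD : IsGreedy hwt C (i + 1) D) : D ≠ ⊥ := by
  rintro rfl
  simpa using hD.finrank_eq hC

theorem dminN_le_dminN (hC : C ≠ ⊥) :
    ∀ {i : ℕ} {D D' : Submodule 𝔽 (ι → 𝔽)}, IsGreedy hwt C i D → IsGreedy hwt C i D' →
      dminN hwt D' ≤ dminN hwt D
  | 0, _, _, rfl, rfl => le_rfl
  | 1, _, _, hD, hD' => (hD'.dminN_eq_sSup hC).trans (hD.dminN_eq_sSup hC).symm |>.le
  | _ + 2, _, _, ⟨_, _, _, _, _, hmax⟩, ⟨_, hD₀', hD₀'D', hD'C, hD', _⟩ =>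
    hmax _ _ hD₀' hD₀'D' hD'C hD'

theorem alphaG_eq (hC : C ≠ ⊥) {i : ℕ} (hD : IsGreedy hwt C i D) :
    alphaG hwt C i = dminN hwt D :=
  IsGreatest.csSup_eq ⟨⟨D, hD, rfl⟩, by rintro _ ⟨D', hD', rfl⟩; exact hD.dminN_le_dminN hC hD'⟩

theorem exists_isGreedy_notMem_minWeight (hC : C ≠ ⊥) :
    ∀ {j : ℕ} {E : Submodule 𝔽 (ι → 𝔽)}, IsGreedy hwt C (j + 1) E →
      ∃ D x, IsGreedy hwt C j D ∧ D ≤ E ∧ x ∈ E ∧ x ∉ D ∧ hwt x = dminN hwt E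
  | 0, _, ⟨c, _, hc, rfl⟩ => by
    have hc0 := ne_zero_of_hwt_eq_sSup hC hc
    exact ⟨⊥, c, rfl, bot_le, mem_span_singleton_self c, by simpa using hc0,
      (dminN_hwt_span_singleton hc0).symm⟩
  | j + 1, E, hE => by
    have hE_ne := hE.ne_bot hC
    obtain ⟨D₀, hD₀, hD₀E, hEC, hE_finrank, -⟩ := hE
    rcases (dminN_le_dminN_of_le (hD₀.ne_bot hC) hD₀E).lt_or_eq with hlt | heq
    · obtain ⟨x, hxE, hxD₀, hxw⟩ := exists_wt_eq_dminN_notMem_of_dminN_lt hE_ne hlt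
      exact ⟨D₀, x, hD₀, hD₀E, hxE, hxD₀, hxw⟩
    cases j with
    | zero =>
      obtain ⟨x, hxE, hxD₀⟩ := exists_mem_notMem_of_finrank_lt
        (by rw [hD₀.finrank_eq hC, hE_finrank]; omega : finrank 𝔽 D₀ < finrank 𝔽 E)
      -- `D₀` is spanned by a word of maximum weight, so no word of `E` is heavier than `dminN E`.
      refine ⟨D₀, x, hD₀, hD₀E, hxE, hxD₀, le_antisymm ?_ (dminN_le hxE ?_)⟩
      · exact (hwt_le_sSup (hEC hxE)).trans (heq ▸ hD₀.dminN_eq_sSup hC).ge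
      · rintro rfl; exact hxD₀ D₀.zero_mem
    | succ m =>
      obtain ⟨D₁, y, hD₁, hD₁D₀, hyD₀, hyD₁, hyw⟩ := exists_isGreedy_notMem_minWeight hC hD₀
      have hD₁_finrank := hD₁.finrank_eq hC
      obtain ⟨z, hzE, hzD₁y⟩ := exists_mem_notMem_of_finrank_lt
        (by rw [finrank_sup_span_singleton hyD₁, hD₁_finrank, hE_finrank]; omega :
          finrank 𝔽 ↥(D₁ ⊔ span 𝔽 {y}) < finrank 𝔽 E)
      have hzD₁ : z ∉ D₁ := fun hz => hzD₁y (mem_sup_left hz)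
      have hFE : D₁ ⊔ span 𝔽 {z} ≤ E :=
        sup_le (hD₁D₀.trans hD₀E) (span_le.mpr (singleton_subset_iff.mpr hzE))
      have hF : IsGreedy hwt C (m + 2) (D₁ ⊔ span 𝔽 {z}) := hD₀.of_dminN_le hD₁ le_sup_left
        (hFE.trans hEC) (by rw [finrank_sup_span_singleton hzD₁, hD₁_finrank])
        (heq ▸ dminN_le_dminN_of_le (ne_bot_of_le_ne_bot (hD₁.ne_bot hC) le_sup_left) hFE)
      exact ⟨_, y, hF, hFE, hD₀E hyD₀, fun hyF => hzD₁y (mem_sup_span_singleton_exchange hyF hyD₁),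
        hyw.trans heq.symm⟩

theorem exists_chain (hC : C ≠ ⊥) :
    ∀ {j : ℕ} {E : Submodule 𝔽 (ι → 𝔽)}, IsGreedy hwt C j E →
      ∃ g : ℕ → ι → 𝔽, span 𝔽 (g '' Iio j) = E ∧
        ∀ i < j, IsGreedy hwt C (i + 1) (span 𝔽 (g '' Iic i)) ∧ g i ∉ span 𝔽 (g '' Iio i) ∧
          hwt (g i) = dminN hwt (span 𝔽 (g '' Iic i))
  | 0, E, hE => ⟨0, by simpa using hE.symm, by simp⟩
  | j + 1, E, hE => by
    obtain ⟨D, x, hD, hDE, hxE, hxD, hxw⟩ := hE.exists_isGreedy_notMem_minWeight hC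
    obtain ⟨g, hgD, hg⟩ := hD.exists_chain hC
    let g' := Function.update g j x
    have hg'j : g' j = x := Function.update_self j x g
    have hg'g : EqOn g' g (Iio j) := fun t ht => Function.update_of_ne (ne_of_lt ht) x g
    have hg'E : span 𝔽 (g' '' Iic j) = E := by
      rw [← Iio_insert, image_insert_eq, hg'g.image_eq, span_insert, hgD, hg'j, sup_comm]
      refine eq_of_le_of_finrank_eq (sup_le hDE (span_le.mpr (singleton_subset_iff.mpr hxE))) ?_
      rw [finrank_sup_span_singleton hxD, hD.finrank_eq hC, hE.finrank_eq hC]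
    refine ⟨g', by rwa [Iio_add_one_eq_Iic], fun i hi => ?_⟩
    rcases (Nat.lt_succ_iff.mp hi).lt_or_eq with hij | rfl
    · rw [hg'g hij, (hg'g.mono (Iic_subset_Iio.mpr hij)).image_eq,
        (hg'g.mono (Iio_subset_Iio hij.le)).image_eq]
      exact hg i hij
    · rw [hg'E, hg'j, hg'g.image_eq, hgD]
      exact ⟨hE, hxD, hxw⟩

end IsGreedy

theorem exists_isGreedy (hC : C ≠ ⊥) :
    ∀ {j : ℕ}, j ≤ finrank 𝔽 C → ∃ E, IsGreedy hwt C j E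
  | 0, _ => ⟨⊥, rfl⟩
  | 1, _ => by
    obtain ⟨c, hc, hcw⟩ := Nat.sSup_mem (s := hwt '' (C : Set (ι → 𝔽))) ⟨_, 0, C.zero_mem, rfl⟩
      (bddAbove_image_hwt _)
    exact ⟨_, c, hc, hcw, rfl⟩
  | i + 2, hi => by
    obtain ⟨D, hD⟩ := exists_isGreedy hC (j := i + 1) (by omega)
    have hDC := hD.le
    have hD_finrank := hD.finrank_eq hC
    obtain ⟨v, hvC, hvD⟩ := exists_mem_notMem_of_finrank_lt
      (by omega : finrank 𝔽 D < finrank 𝔽 C)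
    let extensions := {E : Submodule 𝔽 (ι → 𝔽) | ∃ D, IsGreedy hwt C (i + 1) D ∧ D ≤ E ∧
      E ≤ C ∧ finrank 𝔽 E = i + 2}
    have hne : extensions.Nonempty := ⟨D ⊔ span 𝔽 {v}, D, hD, le_sup_left,
      sup_le hDC (span_le.mpr (singleton_subset_iff.mpr hvC)),
      by rw [finrank_sup_span_singleton hvD, hD_finrank]⟩
    obtain ⟨E, ⟨D', hD', hD'E, hEC, hE⟩, hmax⟩ := exists_forall_le_of_bddAbove (dminN hwt) hne
      ⟨Nat.card ι, by rintro _ ⟨F, -, rfl⟩; exact dminN_hwt_le_card F⟩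
    exact ⟨E, D', hD', hD'E, hEC, hE, fun E' D'' h₁ h₂ h₃ h₄ => hmax E' ⟨D'', h₁, h₂, h₃, h₄⟩⟩

end Hamming

theorem exists_generator_matrix_partial_distances_eq_greedy_general
    {𝔽 : Type*} [Field 𝔽] {n k : ℕ}
    (C : Submodule 𝔽 (Fin n → 𝔽)) (hC : C ≠ ⊥) (hk : finrank 𝔽 C = k) :
    ∃ g : Fin k → (Fin n → 𝔽),
      Submodule.span 𝔽 (Set.range g) = C ∧ LinearIndependent 𝔽 g ∧
      ∀ (i : ℕ) (hi : i < k),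
        IsGreedy hwt C (i + 1) (Submodule.span 𝔽 (g '' {j : Fin k | (j : ℕ) ≤ i})) ∧
        alphaG hwt C (i + 1) = dminN hwt (Submodule.span 𝔽 (g '' {j : Fin k | (j : ℕ) ≤ i})) ∧
        alphaG hwt C (i + 1) = hwt (g ⟨i, hi⟩) ∧
        alphaG hwt C (i + 1) =
          sInf {w : ℕ | ∃ v : Fin n → 𝔽,
            v - g ⟨i, hi⟩ ∈ Submodule.span 𝔽 (g '' {j : Fin k | (j : ℕ) < i}) ∧
            hwt v = w} := by
  obtain ⟨E, hE⟩ := exists_isGreedy hC le_rfl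
  obtain rfl : C = E := (eq_of_le_of_finrank_eq hE.le (hE.finrank_eq hC)).symm
  obtain ⟨g, hgC, hg⟩ := (hk ▸ hE).exists_chain hC
  have hspan : span 𝔽 (range (g ∘ (Fin.val : Fin k → ℕ))) = C := by
    rw [range_comp, Fin.range_val, hgC]
  refine ⟨g ∘ Fin.val, hspan, ?_, fun i hi => ?_⟩
  · rw [linearIndependent_iff_card_eq_finrank_span, Set.finrank, hspan, Fintype.card_fin, hk]
  obtain ⟨hgreedy, hgi, hgi_wt⟩ := hg i hi
  have hIic : (g ∘ Fin.val) '' {j : Fin k | (j : ℕ) ≤ i} = g '' Iic i := by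
    rw [image_comp]; exact congrArg _ (Fin.image_val_Iic ⟨i, hi⟩)
  have hIio : (g ∘ Fin.val) '' {j : Fin k | (j : ℕ) < i} = g '' Iio i := by
    rw [image_comp]; exact congrArg _ (Fin.image_val_Iio ⟨i, hi⟩)
  rw [hIic, hIio, hgreedy.alphaG_eq hC]
  refine ⟨hgreedy, rfl, hgi_wt.symm, ((sInf_wt_coset_eq (span_mono (image_mono Iio_subset_Iic_self))
    (subset_span (mem_image_of_mem g (mem_Iic.mpr le_rfl))) hgi hgi_wt).trans hgi_wt).symm⟩

/-- For a `k`-dimensional linear block code `C ⊆ 𝔽_q^n` (Hamming metric) there is a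
generator matrix with rows `g₀, …, g_{k-1}` such that `D_i = ⟨g₀,…,g_{i-1}⟩` is a chain of
greedy subcodes and, for each `i`, the greedy subcode distance `α_i^g(C)` equals both the
`i`-th partial distance `min{wt(v) : v ∈ g_{i-1} + ⟨g₀,…,g_{i-2}⟩}` of the matrix and the
Hamming weight of `g_{i-1}`. -/
theorem exists_generator_matrix_partial_distances_eq_greedy
    {𝔽 : Type*} [Field 𝔽] [Fintype 𝔽] {n k : ℕ}
    (C : Submodule 𝔽 (Fin n → 𝔽)) (hC : C ≠ ⊥) (hk : finrank 𝔽 C = k) (hk1 : 1 ≤ k) :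
    ∃ g : Fin k → (Fin n → 𝔽),
      Submodule.span 𝔽 (Set.range g) = C ∧ LinearIndependent 𝔽 g ∧
      ∀ (i : ℕ) (hi : i < k),
        IsGreedy hwt C (i + 1) (Submodule.span 𝔽 (g '' {j : Fin k | (j : ℕ) ≤ i})) ∧
        alphaG hwt C (i + 1) = dminN hwt (Submodule.span 𝔽 (g '' {j : Fin k | (j : ℕ) ≤ i})) ∧
        alphaG hwt C (i + 1) = hwt (g ⟨i, hi⟩) ∧
        alphaG hwt C (i + 1) =
          sInf {w : ℕ | ∃ v : Fin n → 𝔽,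
            v - g ⟨i, hi⟩ ∈ Submodule.span 𝔽 (g '' {j : Fin k | (j : ℕ) < i}) ∧
            hwt v = w} :=
  exists_generator_matrix_partial_distances_eq_greedy_general C hC hk
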